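/- Let (R, m, k) be a commutative Noetherian local ring and let I be an ideal of R of positive grade. If m·⋀²_R(I) = 0, then the antisymmetrization map ι : ⋀²_R(I) → I ⊗_R I, determined by x ∧ y ↦ x ⊗ y − y ⊗ x, is injective. -/

import Mathlib

/-!
Because `𝔪` kills `⋀²_R I`, reduction modulo `𝔪` embeds `⋀²_R I` into `⋀²_k (k ⊗_R I)`: by
Nakayama, lifts of a `k`-basis of `k ⊗_R I` generate `I`, so their ordered wedges span `⋀²_R I`;
they map to a basis, so a combination of them with image zero has all coefficients in `𝔪` and
vanishes. The coordinates of that basis are determinants `f a * g b - f b * g a`, i.e. linear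
forms in `a ⊗ b - b ⊗ a`, so the image of an element killed by the antisymmetrization is zero.
-/

open ExteriorAlgebra TensorProduct

/-- The wedge `a ∧ b` of two elements of `M`, as an element of the second exterior power
`⋀[R]^2 M` (realized in Mathlib as a submodule of the exterior algebra). -/
noncomputable def wedge {R M : Type*} [CommRing R] [AddCommGroup M] [Module R M] (a b : M) :
    ⋀[R]^2 M :=
  ⟨ιMulti R 2 ![a, b], ιMulti_range R 2 ⟨![a, b], rfl⟩⟩

theorem LinearMap.injective_of_linearIndependent_of_span_eq_top
    {R S M N ι : Type*} [CommRing R] [CommRing S] [Algebra R S]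
    [AddCommGroup M] [Module R M] [AddCommGroup N] [Module R N] [Module S N] [IsScalarTower R S N]
    (f : M →ₗ[R] N) {v : ι → M} (hv : Submodule.span R (Set.range v) = ⊤)
    (hfv : LinearIndependent S (f ∘ v))
    (htors : ∀ r : R, algebraMap R S r = 0 → ∀ z : M, r • z = 0) :
    Function.Injective f := by
  refine (injective_iff_map_eq_zero f).mpr fun z hz => ?_
  obtain ⟨c, rfl⟩ := Finsupp.mem_span_range_iff_exists_finsupp.mp (hv ▸ Submodule.mem_top (x := z))
  have hc : c.mapRange (algebraMap R S) (map_zero _) = 0 := by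
    refine linearIndependent_iff.mp hfv _ ?_
    simpa [Finsupp.linearCombination_apply, Finsupp.sum_mapRange_index, map_finsuppSum,
      algebraMap_smul] using hz
  simp [Finsupp.sum, htors _ (DFunLike.congr_fun hc _)]

namespace exteriorPower

variable {R M : Type*} [CommRing R] [AddCommGroup M] [Module R M]

section BaseChange

variable (S : Type*) [CommRing S] [Algebra R S] (n : ℕ)

noncomputable def toBaseChange : ⋀[R]^n M →ₗ[R] ⋀[S]^n (S ⊗[R] M) :=
  alternatingMapLinearEquiv
    { ((ιMulti S n).toMultilinearMap.restrictScalars R).compLinearMap fun _ => mk R S M 1 with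
      map_eq_zero_of_eq' := fun v i j hv hij =>
        (ιMulti S n).map_eq_zero_of_eq _ (by simp [hv]) hij }

variable {S n}

@[simp]
theorem toBaseChange_ιMulti (v : Fin n → M) :
    toBaseChange S n (ιMulti R n v) = ιMulti S n fun i => 1 ⊗ₜ v i := by
  rw [toBaseChange, alternatingMapLinearEquiv_apply_ιMulti]
  rfl

theorem toBaseChange_ιMulti_family {ι : Type*} [LinearOrder ι] (v : ι → M)
    (s : Set.powersetCard ι n) :
    toBaseChange S n (ιMulti_family R n v s) = ιMulti_family S n (fun i => 1 ⊗ₜ v i) s := by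
  simp [ιMulti_family, Function.comp_def]

end BaseChange

open IsLocalRing in
theorem toBaseChange_residueField_injective [IsLocalRing R] [Module.Finite R M] {n : ℕ}
    (hkill : ∀ r ∈ maximalIdeal R, ∀ z : ⋀[R]^n M, r • z = 0) :
    Function.Injective (toBaseChange (R := R) (M := M) (ResidueField R) n) := by
  let b := Module.Free.chooseBasis (ResidueField R) (ResidueField R ⊗[R] M)
  let _ : LinearOrder (Module.Free.ChooseBasisIndex (ResidueField R) (ResidueField R ⊗[R] M)) :=
    IsWellOrder.linearOrder WellOrderingRel
  choose x hx using fun i => TensorProduct.mk_surjective R M _ Ideal.Quotient.mk_surjective (b i)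
  refine LinearMap.injective_of_linearIndependent_of_span_eq_top (S := ResidueField R) _
    (ιMulti_family_span_of_span R (span_eq_top_of_tmul_eq_basis x b hx)) ?_
    fun r hr => hkill r ((residue_eq_zero_iff r).mp hr)
  have hb : (fun i => (1 : ResidueField R) ⊗ₜ[R] x i) = b := funext hx
  have : toBaseChange (ResidueField R) n ∘ ιMulti_family R n x = b.exteriorPower n := by
    ext1 s
    simp [toBaseChange_ιMulti_family, hb]
  rw [this]
  exact (b.exteriorPower n).linearIndependent

theorem eq_zero_of_forall_pairingDual_ιMulti_eq_zero [Module.Free R M] {n : ℕ} {z : ⋀[R]^n M}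
    (hz : ∀ f : Fin n → Module.Dual R M, pairingDual R M n (ιMulti R n f) z = 0) : z = 0 := by
  let b := Module.Free.chooseBasis R M
  let _ : LinearOrder (Module.Free.ChooseBasisIndex R M) := IsWellOrder.linearOrder WellOrderingRel
  refine (b.exteriorPower n).forall_coord_eq_zero_iff.mp fun s => ?_
  rw [basis_coord]
  exact hz _

theorem pairingDual_ιMulti_toBaseChange {S : Type*} [CommRing S] [Algebra R S]
    (φ : ⋀[R]^2 M →ₗ[R] M ⊗[R] M) (hφ : ∀ a b : M, φ (wedge a b) = a ⊗ₜ b - b ⊗ₜ a)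
    (f : Fin 2 → Module.Dual S (S ⊗[R] M)) (z : ⋀[R]^2 M) :
    pairingDual S _ 2 (ιMulti S 2 f) (toBaseChange S 2 z) =
      lift ((LinearMap.mul R S).compl₁₂ ((f 0).restrictScalars R ∘ₗ mk R S M 1)
        ((f 1).restrictScalars R ∘ₗ mk R S M 1)) (φ z) := by
  suffices (pairingDual S _ 2 (ιMulti S 2 f)).restrictScalars R ∘ₗ toBaseChange S 2 =
      lift ((LinearMap.mul R S).compl₁₂ ((f 0).restrictScalars R ∘ₗ mk R S M 1)
        ((f 1).restrictScalars R ∘ₗ mk R S M 1)) ∘ₗ φ from LinearMap.congr_fun this z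
  refine linearMap_ext (AlternatingMap.ext fun v => ?_)
  rw [show v = ![v 0, v 1] by ext i; fin_cases i <;> rfl]
  have hφ' (a b : M) : φ (ιMulti R 2 ![a, b]) = a ⊗ₜ b - b ⊗ₜ a := hφ a b
  simp [Matrix.det_fin_two, hφ', mul_comm]

end exteriorPower

theorem antisymmetrization_injective {R : Type*} [CommRing R] [IsNoetherianRing R] [IsLocalRing R]
    (I : Ideal R)
    (hkill : ∀ r ∈ IsLocalRing.maximalIdeal R, ∀ z : ⋀[R]^2 ↥I, r • z = 0)
    (ι : ↥(⋀[R]^2 ↥I) →ₗ[R] (↥I ⊗[R] ↥I))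
    (hι : ∀ a b : ↥I, ι (wedge a b) = a ⊗ₜ[R] b - b ⊗ₜ[R] a) :
    Function.Injective ι := by
  refine (injective_iff_map_eq_zero ι).mpr fun z hz =>
    exteriorPower.toBaseChange_residueField_injective hkill ?_
  rw [map_zero]
  refine exteriorPower.eq_zero_of_forall_pairingDual_ιMulti_eq_zero fun f => ?_
  rw [exteriorPower.pairingDual_ιMulti_toBaseChange ι hι, hz, map_zero]
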